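/- arXiv:math/0502262 — 2 statements merged into one kernel-verified Lean document; each statement's English description precedes it below -/
import Mathlib

section
/- Let f, g : ℝⁿ → ℝⁿ be real-analytic maps on a connected open set D ⊆ ℝⁿ agreeing on a subset K ⊆ D of positive Lebesgue measure. Then f = g on D. -/
open MeasureTheory Metric Filter Set Topology Pointwise

namespace AnalyticAgreeAux

variable {n : ℕ} {F : Type*} [NormedAddCommGroup F] [NormedSpace ℝ F]

/-- Density points (w.r.t. outer measure) of a set in Euclidean space. -/
def densPts (n : ℕ) (S : Set (EuclideanSpace ℝ (Fin n))) : Set (EuclideanSpace ℝ (Fin n)) :=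
  {x | Tendsto (fun r => volume (S ∩ closedBall x r) / volume (closedBall x r)) (𝓝[>] 0) (𝓝 1)}

lemma densPts_null (S : Set (EuclideanSpace ℝ (Fin n))) :
    volume (S \ densPts n S) = 0 := by
  have h := Besicovitch.ae_tendsto_measure_inter_div volume S
  rw [ae_iff] at h
  have h' : volume.restrict S ((densPts n S)ᶜ) = 0 := h
  refine le_antisymm ?_ (zero_le)
  calc volume (S \ densPts n S) = volume ((densPts n S)ᶜ ∩ S) := by rw [diff_eq, inter_comm]
    _ ≤ volume.restrict S ((densPts n S)ᶜ) := Measure.le_restrict_apply _ _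
    _ = 0 := h'

set_option maxHeartbeats 1000000 in
lemma fderiv_eq_zero_at_density_point {h : EuclideanSpace ℝ (Fin n) → F}
    {S : Set (EuclideanSpace ℝ (Fin n))} {x : EuclideanSpace ℝ (Fin n)}
    (hdiff : DifferentiableAt ℝ h x) (hzero : ∀ y ∈ S, h y = 0) (hxS : x ∈ S)
    (hxd : x ∈ densPts n S) : fderiv ℝ h x = 0 := by
  by_contra hL
  set L := fderiv ℝ h x with hLdef
  obtain ⟨v, hv⟩ : ∃ v, L v ≠ 0 := by
    by_contra hc; push_neg at hc
    exact hL (ContinuousLinearMap.ext fun v => by simp [hc v])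
  have hvne : v ≠ 0 := fun h0 => hv (by simp [h0])
  set c : ℝ := ‖L v‖ / ‖v‖ with hc
  have hcpos : 0 < c := div_pos (norm_pos_iff.2 hv) (norm_pos_iff.2 hvne)
  -- the cone where `L` is large
  set C : Set (EuclideanSpace ℝ (Fin n)) := {w | c / 2 * ‖w‖ < ‖L w‖} with hC
  have hCopen : IsOpen C := isOpen_lt (by fun_prop) (by fun_prop)
  set A := C ∩ ball (0 : EuclideanSpace ℝ (Fin n)) 1 with hA
  have hAopen : IsOpen A := hCopen.inter isOpen_ball
  have hAne : A.Nonempty := by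
    refine ⟨(‖v‖⁻¹ / 2) • v, ?_, ?_⟩
    · have hnv : 0 < ‖v‖ := norm_pos_iff.2 hvne
      have h1 : ‖(‖v‖⁻¹ / 2) • v‖ = 1 / 2 := by
        rw [norm_smul, Real.norm_eq_abs, abs_of_pos (by positivity)]
        field_simp
      have h2 : ‖L ((‖v‖⁻¹ / 2) • v)‖ = c / 2 := by
        rw [L.map_smul, norm_smul, Real.norm_eq_abs, abs_of_pos (div_pos (inv_pos.2 hnv) two_pos), hc]
        field_simp
      simp only [hC, mem_setOf_eq, h1, h2]
      linarith
    · simp only [mem_ball, dist_zero_right, norm_smul, Real.norm_eq_abs]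
      have hnv : 0 < ‖v‖ := norm_pos_iff.2 hvne
      rw [abs_of_pos (div_pos (inv_pos.2 hnv) two_pos)]
      rw [div_mul_eq_mul_div, inv_mul_cancel₀ hnv.ne']
      norm_num
  set d := Module.finrank ℝ (EuclideanSpace ℝ (Fin n)) with hd
  set B₁ := volume (ball (0 : EuclideanSpace ℝ (Fin n)) 1) with hB₁
  set θ := volume A with hθ
  have hB₁0 : B₁ ≠ 0 := (measure_ball_pos volume 0 one_pos).ne'
  have hB₁T : B₁ ≠ ⊤ := measure_ball_lt_top.ne
  have hθ0 : θ ≠ 0 := (hAopen.measure_pos volume hAne).ne'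
  have hθT : θ ≠ ⊤ := ((measure_mono inter_subset_right).trans_lt measure_ball_lt_top).ne
  set a := θ / B₁ with ha
  have ha0 : a ≠ 0 := (ENNReal.div_pos hθ0 hB₁T).ne'
  have h1a : 1 - a < 1 := ENNReal.sub_lt_self ENNReal.one_ne_top one_ne_zero ha0
  -- differentiability estimate
  have hx0 : h x = 0 := hzero x hxS
  have hlo := (hdiff.hasFDerivAt.isLittleO).def (show (0:ℝ) < c / 4 by positivity)
  rw [Metric.eventually_nhds_iff] at hlo
  obtain ⟨δ, hδpos, hδ⟩ := hlo
  -- for 0 < r < δ, the density ratio is at most 1 - a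
  have key : ∀ r ∈ Ioo (0:ℝ) δ,
      volume (S ∩ closedBall x r) / volume (closedBall x r) ≤ 1 - a := by
    intro r hr
    obtain ⟨hr0, hrδ⟩ := hr
    set R := ENNReal.ofReal (r ^ d) with hR
    have hR0 : R ≠ 0 := by
      simp [hR, ENNReal.ofReal_eq_zero, not_le, pow_pos hr0]
    have hRT : R ≠ ⊤ := ENNReal.ofReal_ne_top
    have hcB : volume (closedBall x r) = R * B₁ := Measure.addHaar_closedBall volume x hr0.le
    set Sr := x +ᵥ (r • A) with hSrdef
    have hSrvol : volume Sr = R * θ := by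
      rw [hSrdef, measure_vadd, Measure.addHaar_smul, abs_of_pos (pow_pos hr0 _)]
    have hSrsub : Sr ⊆ closedBall x r := by
      rintro y ⟨b, ⟨w, hwA, rfl⟩, rfl⟩
      have hw1 : ‖w‖ < 1 := by simpa [dist_zero_right] using hwA.2
      have : dist (x +ᵥ r • w) x = r * ‖w‖ := by
        simp [dist_eq_norm, norm_smul, abs_of_pos hr0]
      rw [mem_closedBall, this]
      nlinarith [norm_nonneg w]
    have hdisj : S ∩ closedBall x r ⊆ closedBall x r \ Sr := by
      rintro y ⟨hyS, hycB⟩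
      refine ⟨hycB, ?_⟩
      rintro ⟨b, ⟨w, hwA, rfl⟩, rfl⟩
      obtain ⟨hwC, hwB⟩ := hwA
      have hw1 : ‖w‖ < 1 := by simpa [dist_zero_right] using hwB
      have hwne : w ≠ 0 := by
        intro h0; rw [h0] at hwC
        simp [hC] at hwC
      have hwpos : 0 < ‖w‖ := norm_pos_iff.2 hwne
      set y := x +ᵥ r • w with hy
      have hyx : y - x = r • w := by simp [hy, vadd_eq_add]
      have hnyx : ‖y - x‖ = r * ‖w‖ := by rw [hyx, norm_smul, Real.norm_eq_abs, abs_of_pos hr0]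
      have hdist : dist y x < δ := by
        rw [dist_eq_norm, hnyx]
        nlinarith
      have hbound := hδ hdist
      rw [hzero y hyS, hx0] at hbound
      simp only [zero_sub, sub_zero, norm_neg] at hbound
      -- hbound : ‖L (y - x)‖ ≤ c/4 * ‖y - x‖  (possibly with 0 - ... shape)
      have hLlarge : c / 2 * ‖y - x‖ < ‖L (y - x)‖ := by
        rw [hyx, L.map_smul, norm_smul, norm_smul, Real.norm_eq_abs, abs_of_pos hr0]
        have := hwC
        rw [hC, mem_setOf_eq] at this
        nlinarith
      have : ‖L (y - x)‖ ≤ c / 4 * ‖y - x‖ := by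
        simpa using hbound
      rw [hnyx] at hLlarge this
      nlinarith [mul_pos hcpos (mul_pos hr0 hwpos)]
    have hvol_le : volume (S ∩ closedBall x r) ≤ R * B₁ - R * θ := by
      calc volume (S ∩ closedBall x r) ≤ volume (closedBall x r \ Sr) := measure_mono hdisj
        _ = volume (closedBall x r) - volume Sr :=
            measure_diff hSrsub ((hAopen.smul₀ hr0.ne').vadd x).measurableSet.nullMeasurableSet
              (by rw [hSrvol]; exact ENNReal.mul_ne_top hRT hθT)
        _ = R * B₁ - R * θ := by rw [hcB, hSrvol]
    rw [hcB]
    rw [ENNReal.div_le_iff (by exact mul_ne_zero hR0 hB₁0) (ENNReal.mul_ne_top hRT hB₁T)]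
    have hsub : (1 - a) * (R * B₁) = R * B₁ - a * (R * B₁) := by
      rw [ENNReal.sub_mul (fun _ _ => ENNReal.mul_ne_top hRT hB₁T), one_mul]
    have haRB : a * (R * B₁) = R * θ := by
      rw [ha, mul_comm R B₁, ← mul_assoc, ENNReal.div_mul_cancel hB₁0 hB₁T, mul_comm]
    rw [hsub, haRB]
    exact hvol_le
  -- contradiction with density 1
  have hev1 : ∀ᶠ r in 𝓝[>] (0:ℝ),
      1 - a < volume (S ∩ closedBall x r) / volume (closedBall x r) :=
    hxd (Ioi_mem_nhds h1a)
  have hev2 : ∀ᶠ r in 𝓝[>] (0:ℝ), r ∈ Ioo (0:ℝ) δ :=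
    Ioo_mem_nhdsGT_of_mem ⟨le_refl 0, hδpos⟩
  obtain ⟨r, hr1, hr2⟩ := (hev1.and hev2).exists
  exact absurd (key r hr2) (not_le.2 hr1)

end AnalyticAgreeAux

theorem analytic_maps_agree_of_positive_measure (n : ℕ)
    (f g : EuclideanSpace ℝ (Fin n) → EuclideanSpace ℝ (Fin n))
    (D K : Set (EuclideanSpace ℝ (Fin n)))
    (hD : IsOpen D) (hconn : IsConnected D)
    (hf : AnalyticOn ℝ f D) (hg : AnalyticOn ℝ g D)
    (hK : K ⊆ D) (hpos : 0 < MeasureTheory.volume K)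
    (heq : Set.EqOn f g K) :
    Set.EqOn f g D := by
  classical
  set h : EuclideanSpace ℝ (Fin n) → EuclideanSpace ℝ (Fin n) := fun y => f y - g y with hh
  have hfN : AnalyticOnNhd ℝ f D := (hD.analyticOn_iff_analyticOnNhd).1 hf
  have hgN : AnalyticOnNhd ℝ g D := (hD.analyticOn_iff_analyticOnNhd).1 hg
  have hN : AnalyticOnNhd ℝ h D := hfN.sub hgN
  have hNm : ∀ m : ℕ, AnalyticOnNhd ℝ (iteratedFDeriv ℝ m h) D := fun m => hN.iteratedFDeriv m
  -- recursive core of density points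
  let Ks : ℕ → Set (EuclideanSpace ℝ (Fin n)) := fun m =>
    Nat.rec K (fun _ s => s ∩ AnalyticAgreeAux.densPts n s) m
  have hKs0 : Ks 0 = K := rfl
  have hKsS : ∀ m, Ks (m + 1) = Ks m ∩ AnalyticAgreeAux.densPts n (Ks m) := fun m => rfl
  have hKsub : ∀ m, Ks m ⊆ K := by
    intro m; induction m with
    | zero => exact subset_rfl
    | succ m ih => rw [hKsS]; exact inter_subset_left.trans ih
  have hnull : ∀ m, volume (K \ Ks m) = 0 := by
    intro m; induction m with
    | zero => simp [hKs0]
    | succ m ih =>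
      have hsub : K \ Ks (m + 1) ⊆ (K \ Ks m) ∪ (Ks m \ AnalyticAgreeAux.densPts n (Ks m)) := by
        intro y hy
        rw [hKsS] at hy
        rcases Classical.em (y ∈ Ks m) with hym | hym
        · exact Or.inr ⟨hym, fun hd => hy.2 ⟨hym, hd⟩⟩
        · exact Or.inl ⟨hy.1, hym⟩
      exact measure_mono_null hsub
        (measure_union_null ih (AnalyticAgreeAux.densPts_null (Ks m)))
  have hvanish : ∀ m, ∀ x ∈ Ks m, iteratedFDeriv ℝ m h x = 0 := by
    intro m; induction m with
    | zero =>
      intro x hx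
      ext v
      have : h x = 0 := sub_eq_zero.2 (heq (hKs0 ▸ hx))
      simp [iteratedFDeriv_zero_apply, this]
    | succ m ih =>
      intro x hx
      rw [hKsS] at hx
      have hxD : x ∈ D := hK (hKsub m hx.1)
      have hdiff : DifferentiableAt ℝ (iteratedFDeriv ℝ m h) x :=
        (hNm m x hxD).differentiableAt
      have hfd : fderiv ℝ (iteratedFDeriv ℝ m h) x = 0 :=
        AnalyticAgreeAux.fderiv_eq_zero_at_density_point hdiff ih hx.1 hx.2
      ext v
      rw [iteratedFDeriv_succ_apply_left, hfd]
      simp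
  -- a point in all the cores
  have hcap : (⋂ m, Ks m).Nonempty := by
    by_contra hemp
    rw [not_nonempty_iff_eq_empty] at hemp
    have : K \ ⋂ m, Ks m = K := by rw [hemp, diff_empty]
    have h0 : volume (K \ ⋂ m, Ks m) = 0 := by
      have : K \ ⋂ m, Ks m ⊆ ⋃ m, K \ Ks m := by
        intro y hy
        rw [mem_diff, mem_iInter] at hy
        push_neg at hy
        obtain ⟨hyK, m, hm⟩ := hy
        exact mem_iUnion.2 ⟨m, hyK, hm⟩
      exact measure_mono_null this (measure_iUnion_null hnull)
    rw [this] at h0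
    exact hpos.ne' h0
  obtain ⟨x₀, hx₀⟩ := hcap
  rw [mem_iInter] at hx₀
  have hx₀K : x₀ ∈ K := hKsub 0 (hx₀ 0)
  have hx₀D : x₀ ∈ D := hK hx₀K
  -- h vanishes near x₀
  obtain ⟨p, hp⟩ := hN x₀ hx₀D
  obtain ⟨r, hball⟩ := hp
  have hzero_near : ∀ᶠ z in nhds x₀, h z = 0 := by
    filter_upwards [EMetric.ball_mem_nhds x₀ hball.r_pos] with z hz
    have hy : z - x₀ ∈ Metric.eball (0 : EuclideanSpace ℝ (Fin n)) r := by
      rwa [EMetric.mem_ball, edist_zero_right, ← edist_eq_enorm_sub]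
    have hsum := hball.hasSum_iteratedFDeriv hy
    have hzero_sum : ∀ m : ℕ,
        ((Nat.factorial m : ℝ))⁻¹ • iteratedFDeriv ℝ m h x₀ (fun _ => z - x₀) = 0 := by
      intro m
      rw [hvanish m x₀ (hx₀ m)]
      simp
    have : HasSum (fun m : ℕ =>
        ((Nat.factorial m : ℝ))⁻¹ • iteratedFDeriv ℝ m h x₀ (fun _ => z - x₀))
        (h (x₀ + (z - x₀))) := hsum
    rw [add_sub_cancel] at this
    have h0 : HasSum (fun _ : ℕ => (0 : EuclideanSpace ℝ (Fin n))) (h z) := by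
      convert this using 1
      funext m
      exact (hzero_sum m).symm
    simpa using h0.unique hasSum_zero
  have hfg : f =ᶠ[nhds x₀] g := by
    filter_upwards [hzero_near] with z hz
    exact sub_eq_zero.1 hz
  exact hfN.eqOn_of_preconnected_of_eventuallyEq hgN hconn.isPreconnected hx₀D hfg
end

section
/- Let q : ℝ → ℝ² solve Newton's equations q̈ = −∇U(q) for a real-analytic potential U on an open set D ⊆ ℝ². If the image of q intersects every sufficiently small circle centered at a point q* ∈ D in infinitely many points, and V is another real-analytic potential with q also solving q̈ = −∇V(q), then ∇U = ∇V on a neighborhood of q*; if moreover D is connected, then U − V is constant on D. -/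
open Metric Set Filter Real
open scoped Topology

noncomputable section PotentialAux

namespace PotentialAux

lemma analyticAt_expI (x : ℝ) :
    AnalyticAt ℝ (fun θ : ℝ => Complex.exp ((θ : ℂ) * Complex.I)) x := by
  have hL : AnalyticAt ℝ (fun θ : ℝ => (θ : ℂ) * Complex.I) x := by
    have h : (fun θ : ℝ => (θ : ℂ) * Complex.I)
        = fun θ => ((ContinuousLinearMap.id ℝ ℝ).smulRight Complex.I) θ := by
      funext θ
      simp [Complex.real_smul]
    rw [h]
    exact ((ContinuousLinearMap.id ℝ ℝ).smulRight Complex.I).analyticAt x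
  exact (analyticAt_cexp.restrictScalars).comp hL

lemma analyticAt_rcos (x : ℝ) : AnalyticAt ℝ Real.cos x := by
  have h : Real.cos = fun θ : ℝ => Complex.reCLM (Complex.exp ((θ : ℂ) * Complex.I)) := by
    funext θ
    simp [Complex.exp_ofReal_mul_I_re]
  rw [h]
  exact (Complex.reCLM.analyticAt _).comp (analyticAt_expI x)

lemma analyticAt_rsin (x : ℝ) : AnalyticAt ℝ Real.sin x := by
  have h : Real.sin = fun θ : ℝ => Complex.imCLM (Complex.exp ((θ : ℂ) * Complex.I)) := by
    funext θ
    simp [Complex.exp_ofReal_mul_I_im]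
  rw [h]
  exact (Complex.imCLM.analyticAt _).comp (analyticAt_expI x)

def ee0 : EuclideanSpace ℝ (Fin 2) := EuclideanSpace.single 0 1
def ee1 : EuclideanSpace ℝ (Fin 2) := EuclideanSpace.single 1 1

lemma norm_combo (a b : ℝ) : ‖a • ee0 + b • ee1‖ = Real.sqrt (a ^ 2 + b ^ 2) := by
  rw [EuclideanSpace.norm_eq]
  congr 1
  simp [ee0, ee1, Fin.sum_univ_two, EuclideanSpace.single_apply, sq_abs]

lemma combo_eq (w : EuclideanSpace ℝ (Fin 2)) : (w 0) • ee0 + (w 1) • ee1 = w := by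
  ext i
  fin_cases i <;> simp [ee0, ee1, EuclideanSpace.single_apply]

/-- The circle parametrization. -/
def cmap (p : EuclideanSpace ℝ (Fin 2)) (ε θ : ℝ) : EuclideanSpace ℝ (Fin 2) :=
  p + ((ε * Real.cos θ) • ee0 + (ε * Real.sin θ) • ee1)

lemma dist_cmap (p : EuclideanSpace ℝ (Fin 2)) (ε θ : ℝ) (hε : 0 ≤ ε) :
    dist (cmap p ε θ) p = ε := by
  rw [dist_eq_norm, cmap, add_sub_cancel_left, norm_combo]
  have : (ε * Real.cos θ) ^ 2 + (ε * Real.sin θ) ^ 2 = ε ^ 2 := by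
    have := Real.sin_sq_add_cos_sq θ
    ring_nf
    nlinarith [Real.sin_sq_add_cos_sq θ]
  rw [this, Real.sqrt_sq hε]

lemma surj_circle (p y : EuclideanSpace ℝ (Fin 2)) (ε : ℝ) (hε : 0 < ε)
    (h : dist y p = ε) :
    ∃ θ ∈ Set.Icc (-π) π, cmap p ε θ = y := by
  set w : EuclideanSpace ℝ (Fin 2) := y - p with hw
  have hnw : Real.sqrt ((w 0) ^ 2 + (w 1) ^ 2) = ε := by
    rw [← norm_combo, combo_eq, hw, ← dist_eq_norm, h]
  set z : ℂ := ⟨w 0, w 1⟩ with hz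
  have habs : ‖z‖ = ε := by
    rw [Complex.norm_def, Complex.normSq_mk]
    rw [← hnw]; ring_nf
  have hz0 : z ≠ 0 := by
    intro h0
    rw [h0, norm_zero] at habs
    exact (ne_of_gt hε) habs.symm
  refine ⟨Complex.arg z, Set.Ioc_subset_Icc_self (Complex.arg_mem_Ioc z), ?_⟩
  have hcos : Real.cos (Complex.arg z) = w 0 / ε := by
    rw [Complex.cos_arg hz0, habs]
  have hsin : Real.sin (Complex.arg z) = w 1 / ε := by
    rw [Complex.sin_arg, habs]
  rw [cmap, hcos, hsin]
  have hε' : ε ≠ 0 := ne_of_gt hε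
  rw [mul_div_cancel₀ _ hε', mul_div_cancel₀ _ hε', combo_eq, hw]
  abel

lemma analyticOnNhd_cmap (p : EuclideanSpace ℝ (Fin 2)) (ε : ℝ) :
    AnalyticOnNhd ℝ (cmap p ε) Set.univ := by
  intro θ _
  unfold cmap
  exact analyticAt_const.add
    (((analyticAt_const.mul (analyticAt_rcos θ)).smul analyticAt_const).add
      ((analyticAt_const.mul (analyticAt_rsin θ)).smul analyticAt_const))

/-- Gradient of an analytic function on an open set is analytic. -/
lemma analyticOnNhd_gradient {f : EuclideanSpace ℝ (Fin 2) → ℝ}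
    {D : Set (EuclideanSpace ℝ (Fin 2))}
    (hf : AnalyticOnNhd ℝ f D) :
    AnalyticOnNhd ℝ (gradient f) D := by
  have h1 : AnalyticOnNhd ℝ (fderiv ℝ f) D := hf.fderiv
  have h2 := ((InnerProductSpace.toDual ℝ
      (EuclideanSpace ℝ (Fin 2))).symm.toContinuousLinearEquiv.toContinuousLinearMap).comp_analyticOnNhd h1
  exact h2

end PotentialAux

open PotentialAux

/-- Uniqueness of a real-analytic potential from a single trajectory that meets every
sufficiently small circle around `q*` in infinitely many points. -/
theorem potential_reconstruction (U V : EuclideanSpace ℝ (Fin 2) → ℝ)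
    (D : Set (EuclideanSpace ℝ (Fin 2))) (hD : IsOpen D)
    (hU : AnalyticOn ℝ U D) (hV : AnalyticOn ℝ V D)
    (q : ℝ → EuclideanSpace ℝ (Fin 2)) (q' : ℝ → EuclideanSpace ℝ (Fin 2))
    (hrange : ∀ t, q t ∈ D)
    (hq : ∀ t, HasDerivAt q (q' t) t)
    (hNewtonU : ∀ t, HasDerivAt q' (-gradient U (q t)) t)
    (hNewtonV : ∀ t, HasDerivAt q' (-gradient V (q t)) t)
    (qstar : EuclideanSpace ℝ (Fin 2)) (hqstar : qstar ∈ D)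
    (hcircles : ∃ ε₀ > 0, ∀ ε ∈ Set.Ioo (0 : ℝ) ε₀,
      {x | dist x qstar = ε ∧ x ∈ Set.range q}.Infinite) :
    (∀ᶠ x in nhds qstar, gradient U x = gradient V x) ∧
    (IsConnected D → ∃ c : ℝ, ∀ x ∈ D, U x - V x = c) := by
  classical
  set g : EuclideanSpace ℝ (Fin 2) → EuclideanSpace ℝ (Fin 2) :=
    fun x => gradient U x - gradient V x with hgdef
  -- g vanishes on the trajectory
  have hg0 : ∀ t, g (q t) = 0 := by
    intro t
    have h := (hNewtonU t).unique (hNewtonV t)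
    have h' : gradient U (q t) = gradient V (q t) := neg_injective h
    simp [hgdef, h', sub_self]
  -- analyticity
  have hU' : AnalyticOnNhd ℝ U D := (hD.analyticOn_iff_analyticOnNhd).mp hU
  have hV' : AnalyticOnNhd ℝ V D := (hD.analyticOn_iff_analyticOnNhd).mp hV
  have hgan : AnalyticOnNhd ℝ g D :=
    (analyticOnNhd_gradient hU').sub (analyticOnNhd_gradient hV')
  obtain ⟨r, hr, hball⟩ := Metric.isOpen_iff.mp hD qstar hqstar
  obtain ⟨ε₀, hε₀, hcirc⟩ := hcircles
  set ε' : ℝ := min ε₀ r with hε'def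
  have hε'pos : 0 < ε' := lt_min hε₀ hr
  have hball' : Metric.ball qstar ε' ⊆ D :=
    fun x hx => hball (Metric.ball_subset_ball (min_le_right _ _) hx)
  -- g vanishes on each small sphere
  have key : ∀ x : EuclideanSpace ℝ (Fin 2), dist x qstar ∈ Set.Ioo (0:ℝ) ε' → g x = 0 := by
    intro x hx
    set ε : ℝ := dist x qstar with hεdef
    have hε : 0 < ε := hx.1
    have hεlt : ε < ε' := hx.2
    set c : ℝ → EuclideanSpace ℝ (Fin 2) := cmap qstar ε with hcdef
    have hmaps : Set.MapsTo c Set.univ D := by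
      intro θ _
      apply hball'
      rw [Metric.mem_ball, hcdef, dist_cmap qstar ε θ hε.le]
      exact hεlt
    have hh : AnalyticOnNhd ℝ (g ∘ c) Set.univ :=
      hgan.comp (analyticOnNhd_cmap qstar ε) hmaps
    set S : Set (EuclideanSpace ℝ (Fin 2)) := {y | dist y qstar = ε ∧ y ∈ Set.range q} with hSdef
    have hSinf : S.Infinite := hcirc ε ⟨hε, lt_of_lt_of_le hεlt (min_le_left _ _)⟩
    set T : Set ℝ := {θ ∈ Set.Icc (-π) π | c θ ∈ S} with hTdef
    have hTsub : T ⊆ Set.Icc (-π) π := fun θ h => h.1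
    have hST : S ⊆ c '' T := by
      intro y hy
      obtain ⟨θ, hθ, hcy⟩ := surj_circle qstar y ε hε hy.1
      exact ⟨θ, ⟨hθ, by simp only [hcdef, hcy]; exact hy⟩, hcy⟩
    have hTinf : T.Infinite := by
      intro hfin
      exact hSinf (Set.Finite.subset (hfin.image c) hST)
    obtain ⟨θ₀, hθ₀mem, hacc⟩ :=
      hTinf.exists_accPt_of_subset_isCompact isCompact_Icc hTsub
    have hfreq : ∃ᶠ θ in 𝓝[≠] θ₀, (g ∘ c) θ = 0 := by
      have h1 := accPt_iff_frequently.mp hacc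
      rw [frequently_nhdsWithin_iff]
      refine h1.mono ?_
      rintro θ ⟨hne, hT⟩
      refine ⟨?_, hne⟩
      obtain ⟨t, ht⟩ := hT.2.2
      simp only [Function.comp_apply, ← ht, hg0 t]
    have hz := hh.eqOn_zero_of_preconnected_of_frequently_eq_zero
      isPreconnected_univ (Set.mem_univ θ₀) hfreq
    obtain ⟨θ, _, hcθ⟩ := surj_circle qstar x ε hε rfl
    have := hz (Set.mem_univ θ)
    simpa only [Function.comp_apply, hcdef, hcθ, Pi.zero_apply] using this
  -- g vanishes at the center by continuity
  have hcenter : g qstar = 0 := by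
    have hc : ContinuousAt g qstar := (hgan qstar hqstar).continuousAt
    have h1 : Tendsto g (𝓝[≠] qstar) (𝓝 (g qstar)) :=
      hc.continuousWithinAt.tendsto
    have hev : ∀ᶠ x in 𝓝[≠] qstar, g x = 0 := by
      rw [eventually_nhdsWithin_iff]
      filter_upwards [Metric.ball_mem_nhds qstar hε'pos] with x hx hne
      exact key x ⟨dist_pos.mpr hne, hx⟩
    have h2 : Tendsto g (𝓝[≠] qstar) (𝓝 0) :=
      Tendsto.congr' (by filter_upwards [hev] with x h; exact h.symm) tendsto_const_nhds
    exact tendsto_nhds_unique h1 h2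
  have hev : ∀ᶠ x in 𝓝 qstar, g x = 0 := by
    filter_upwards [Metric.ball_mem_nhds qstar hε'pos] with x hx
    rcases eq_or_ne x qstar with h | h
    · rw [h]; exact hcenter
    · exact key x ⟨dist_pos.mpr h, hx⟩
  constructor
  · filter_upwards [hev] with x hx
    exact sub_eq_zero.mp hx
  · intro hconn
    have hgD : Set.EqOn g 0 D :=
      hgan.eqOn_zero_of_preconnected_of_eventuallyEq_zero hconn.isPreconnected hqstar hev
    -- hence fderiv U = fderiv V on D
    have hfd : ∀ x ∈ D, fderiv ℝ U x = fderiv ℝ V x := by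
      intro x hx
      have h := sub_eq_zero.mp (hgD hx)
      have h2 := congrArg (InnerProductSpace.toDual ℝ (EuclideanSpace ℝ (Fin 2))) h
      simpa [gradient] using h2
    set W : EuclideanSpace ℝ (Fin 2) → ℝ := fun x => U x - V x with hWdef
    have hWan : AnalyticOnNhd ℝ W D := hU'.sub hV'
    have hWdiff : DifferentiableOn ℝ W (Metric.ball qstar r) := fun x hx =>
      ((hWan x (hball hx)).differentiableAt).differentiableWithinAt
    have hW0 : ∀ x ∈ Metric.ball qstar r,
        fderivWithin ℝ W (Metric.ball qstar r) x = 0 := by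
      intro x hx
      rw [fderivWithin_of_isOpen Metric.isOpen_ball hx]
      have hdU : DifferentiableAt ℝ U x := (hU' x (hball hx)).differentiableAt
      have hdV : DifferentiableAt ℝ V x := (hV' x (hball hx)).differentiableAt
      rw [hWdef]
      rw [fderiv_fun_sub hdU hdV, hfd x (hball hx), sub_self]
    have hWconst : ∀ x ∈ Metric.ball qstar r, W x = W qstar := fun x hx =>
      (convex_ball qstar r).is_const_of_fderivWithin_eq_zero hWdiff hW0 hx
        (Metric.mem_ball_self hr)
    have hevW : W =ᶠ[𝓝 qstar] fun _ => W qstar := by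
      filter_upwards [Metric.ball_mem_nhds qstar hr] with x hx
      exact hWconst x hx
    have := AnalyticOnNhd.eqOn_of_preconnected_of_eventuallyEq hWan
      analyticOnNhd_const hconn.isPreconnected hqstar hevW
    exact ⟨W qstar, fun x hx => this hx⟩
end PotentialAux
end
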